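/- Let σ, ρ > 0 and let φ_μ denote the N(μ, σ²) density. For subsets I, J ⊆ {1,…,k} with m = |I ∩ J|, defining h_I(y₁,…,y_k) = ∏_{i=1}^k [½ φ_{ρ·1{i∈I}}(y_i) + ½ φ_{−ρ·1{i∈I}}(y_i)] and f = ∏_{i=1}^k φ₀(y_i), one has ∫ h_I h_J / f = (cosh(ρ²/σ²))^m. -/

import Mathlib

/-!
Dividing a product of two Gaussian densities by the centred one completes a square:
`φ_a φ_b / φ_0 = exp (a b / σ²) φ_{a+b}`. Hence in one dimension the integral of the two
symmetric mixtures `(φ_a + φ_{-a})/2`, `(φ_b + φ_{-b})/2` against `1/φ_0` is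
`(e^{ab/σ²} + e^{-ab/σ²})/2 = cosh (ab/σ²)`. In `k` dimensions the integrand is a product of
one-dimensional ones, so the integral factorises; the factor at `i` is `cosh (ρ²/σ²)` when
`i ∈ I ∩ J` and `cosh 0 = 1` otherwise.
-/

open MeasureTheory ProbabilityTheory

/-- Density of the `N(m, σ²)` distribution. -/
noncomputable def gpdf (m σ x : ℝ) : ℝ :=
  (Real.sqrt (2 * Real.pi * σ ^ 2))⁻¹ * Real.exp (-(x - m) ^ 2 / (2 * σ ^ 2))

lemma gpdf_eq_gaussianPDFReal (m σ : ℝ) :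
    gpdf m σ = gaussianPDFReal m ⟨σ ^ 2, sq_nonneg σ⟩ := by
  ext x
  simp [gpdf, gaussianPDFReal]
  rfl

lemma integrable_gpdf (m σ : ℝ) : Integrable (gpdf m σ) := by
  rw [gpdf_eq_gaussianPDFReal]
  exact integrable_gaussianPDFReal _ _

lemma integral_gpdf {σ : ℝ} (hσ : σ ≠ 0) (m : ℝ) : ∫ x, gpdf m σ x = 1 := by
  rw [gpdf_eq_gaussianPDFReal]
  exact integral_gaussianPDFReal_eq_one m fun h => pow_ne_zero 2 hσ (congrArg NNReal.toReal h)

lemma gpdf_mul_gpdf_div_gpdf_zero {σ : ℝ} (hσ : σ ≠ 0) (a b x : ℝ) :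
    gpdf a σ x * gpdf b σ x / gpdf 0 σ x = Real.exp (a * b / σ ^ 2) * gpdf (a + b) σ x := by
  set c := (Real.sqrt (2 * Real.pi * σ ^ 2))⁻¹
  have hexp : ∀ u v w, c * Real.exp u * (c * Real.exp v) / (c * Real.exp w) =
      c * Real.exp (u + v - w) := by
    intro u v w
    rw [Real.exp_sub, Real.exp_add]
    field_simp
  rw [gpdf, gpdf, gpdf, gpdf, hexp, mul_left_comm, ← Real.exp_add]
  congr 2
  field_simp
  ring

lemma integral_symmMixture_mul_symmMixture_div_gpdf_zero {σ : ℝ} (hσ : σ ≠ 0) (a b : ℝ) :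
    ∫ y, (2⁻¹ * gpdf a σ y + 2⁻¹ * gpdf (-a) σ y) *
      (2⁻¹ * gpdf b σ y + 2⁻¹ * gpdf (-b) σ y) / gpdf 0 σ y = Real.cosh (a * b / σ ^ 2) := by
  have hexpand : ∀ y, (2⁻¹ * gpdf a σ y + 2⁻¹ * gpdf (-a) σ y) *
      (2⁻¹ * gpdf b σ y + 2⁻¹ * gpdf (-b) σ y) / gpdf 0 σ y =
      4⁻¹ * (Real.exp (a * b / σ ^ 2) * (gpdf (a + b) σ y + gpdf (-a + -b) σ y) +
        Real.exp (-(a * b / σ ^ 2)) * (gpdf (a + -b) σ y + gpdf (-a + b) σ y)) := by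
    intro y
    have e₁ := gpdf_mul_gpdf_div_gpdf_zero hσ a b y
    have e₂ := gpdf_mul_gpdf_div_gpdf_zero hσ a (-b) y
    have e₃ := gpdf_mul_gpdf_div_gpdf_zero hσ (-a) b y
    have e₄ := gpdf_mul_gpdf_div_gpdf_zero hσ (-a) (-b) y
    simp only [neg_mul, mul_neg, neg_neg, neg_div] at e₂ e₃ e₄
    linear_combination 4⁻¹ * (e₁ + e₂ + e₃ + e₄)
  have hint : ∀ m m', Integrable fun y => gpdf m σ y + gpdf m' σ y :=
    fun m m' => (integrable_gpdf m σ).add (integrable_gpdf m' σ)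
  simp only [hexpand]
  rw [integral_const_mul, integral_add ((hint _ _).const_mul _) ((hint _ _).const_mul _),
    integral_const_mul, integral_const_mul,
    integral_add (integrable_gpdf _ σ) (integrable_gpdf _ σ),
    integral_add (integrable_gpdf _ σ) (integrable_gpdf _ σ),
    integral_gpdf hσ, integral_gpdf hσ, integral_gpdf hσ, integral_gpdf hσ, Real.cosh_eq]
  ring

theorem stmt10_general (σ ρ : ℝ) (hσ : 0 < σ) (k : ℕ) (I J : Finset (Fin k)) :
    (∫ y : Fin k → ℝ,
        (∏ i, (2⁻¹ * gpdf (if i ∈ I then ρ else 0) σ (y i) +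
            2⁻¹ * gpdf (if i ∈ I then -ρ else 0) σ (y i))) *
          (∏ i, (2⁻¹ * gpdf (if i ∈ J then ρ else 0) σ (y i) +
            2⁻¹ * gpdf (if i ∈ J then -ρ else 0) σ (y i))) / ∏ i, gpdf 0 σ (y i)) =
      (Real.cosh (ρ ^ 2 / σ ^ 2)) ^ (I ∩ J).card := by
  set a : Finset (Fin k) → Fin k → ℝ := fun S i => if i ∈ S then ρ else 0
  have hneg (S : Finset (Fin k)) (i : Fin k) : (if i ∈ S then -ρ else 0) = -a S i := by
    split_ifs <;> simp [a, *]
  have hfactor (i : Fin k) :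
      ∫ y, (2⁻¹ * gpdf (a I i) σ y + 2⁻¹ * gpdf (-a I i) σ y) *
        (2⁻¹ * gpdf (a J i) σ y + 2⁻¹ * gpdf (-a J i) σ y) / gpdf 0 σ y =
        if i ∈ I ∩ J then Real.cosh (ρ ^ 2 / σ ^ 2) else 1 := by
    rw [integral_symmMixture_mul_symmMixture_div_gpdf_zero hσ.ne']
    by_cases hI : i ∈ I <;> by_cases hJ : i ∈ J <;> simp [a, hI, hJ, sq]
  simp only [hneg, ← Finset.prod_mul_distrib, ← Finset.prod_div_distrib]
  rw [integral_fintype_prod_volume_eq_prod (f := fun i y =>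
    (2⁻¹ * gpdf (a I i) σ y + 2⁻¹ * gpdf (-a I i) σ y) *
      (2⁻¹ * gpdf (a J i) σ y + 2⁻¹ * gpdf (-a J i) σ y) / gpdf 0 σ y)]
  simp only [hfactor, Finset.prod_ite_mem, Finset.univ_inter, Finset.prod_const]

theorem stmt10 (σ ρ : ℝ) (hσ : 0 < σ) (hρ : 0 < ρ) (k : ℕ) (I J : Finset (Fin k)) :
    (∫ y : Fin k → ℝ,
        (∏ i, (2⁻¹ * gpdf (if i ∈ I then ρ else 0) σ (y i) +
            2⁻¹ * gpdf (if i ∈ I then -ρ else 0) σ (y i))) *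
          (∏ i, (2⁻¹ * gpdf (if i ∈ J then ρ else 0) σ (y i) +
            2⁻¹ * gpdf (if i ∈ J then -ρ else 0) σ (y i))) / ∏ i, gpdf 0 σ (y i)) =
      (Real.cosh (ρ ^ 2 / σ ^ 2)) ^ (I ∩ J).card :=
  stmt10_general σ ρ hσ k I J
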